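/- Let 1 ≤ ℓ < k and n ≥ k be integers. Let F be a k-uniform hypergraph with at least one edge such that every (ℓ+1)-element vertex set is contained in at most one edge of F, and such that every ℓ-element vertex set contained in some edge of F is contained in at least n edges of F. Then F contains a copy of every k-uniform ℓ-tree on at most n vertices. -/

import Mathlib

/-!
Embed the edges of the tree greedily, in the tree order. When an edge `e` arrives, its attaching
set `S` (at most `ℓ` vertices, lying in an earlier edge) is already mapped into an edge of `F`, and
we need an edge of `F` through `f S` that meets the image of the earlier vertices only in `f S`;
its remaining vertices then receive `e \ S`. If `|S| = ℓ`, the at least `n` edges through `f S`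
pairwise meet only in `f S`, so each of the fewer than `n` used vertices outside `f S` spoils at
most one of them. If `|S| < ℓ`, complete `f S` inside its edge to an `ℓ`-set, take an edge through
that set avoiding the used vertices, add one of its vertices outside the `ℓ`-set to `f S`
(it is unused), and repeat.
-/

/-- A `k`-uniform hypergraph on a finite vertex set of naturals:
each edge is a `k`-element subset of the vertex set. -/
structure KHypergraph (k : ℕ) where
  verts : Finset ℕ
  edges : Finset (Finset ℕ)
  card_eq : ∀ e ∈ edges, e.card = k
  subset_verts : ∀ e ∈ edges, e ⊆ verts

namespace KHypergraph

/-- `H.IsCopy G f` : the injection `f` embeds `G` into `H` as a subhypergraph. -/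
def IsCopy {k : ℕ} (H G : KHypergraph k) (f : ℕ → ℕ) : Prop :=
  Set.InjOn f ↑G.verts ∧ Set.MapsTo f ↑G.verts ↑H.verts ∧
    ∀ e ∈ G.edges, e.image f ∈ H.edges

/-- `H.Arrows G` : every 2-coloring of the edges of `H` yields a monochromatic copy of `G`. -/
def Arrows {k : ℕ} (H G : KHypergraph k) : Prop :=
  ∀ χ : Finset ℕ → Bool, ∃ (f : ℕ → ℕ) (c : Bool),
    H.IsCopy G f ∧ ∀ e ∈ G.edges, χ (e.image f) = c

/-- The size-Ramsey number `R̂(G)`: the least number of edges of a hypergraph `H` with `H → G`. -/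
noncomputable def sizeRamsey {k : ℕ} (G : KHypergraph k) : ℕ :=
  sInf { m | ∃ H : KHypergraph k, H.Arrows G ∧ H.edges.card = m }

/-- The complete `k`-uniform hypergraph on `N` vertices. -/
def completeHG (k N : ℕ) : KHypergraph k where
  verts := Finset.range N
  edges := Finset.powersetCard k (Finset.range N)
  card_eq := fun _ he => (Finset.mem_powersetCard.mp he).2
  subset_verts := fun _ he => (Finset.mem_powersetCard.mp he).1

/-- The Ramsey number `R(G)`: the least `N` with `K_N^(k) → G`. -/
noncomputable def ramsey {k : ℕ} (G : KHypergraph k) : ℕ :=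
  sInf { N | (completeHG k N).Arrows G }

end KHypergraph

/-- `IsLTree k ℓ T` : `T` is a `k`-uniform `ℓ`-tree, i.e. its edges can be ordered
`e₀, …, e_{m−1}` so that each later edge meets the union of the previous ones in at
most `ℓ` vertices, all of which lie in a single previous edge; the vertex set is
the union of the edges. -/
def IsLTree (k ℓ : ℕ) (T : KHypergraph k) : Prop :=
  T.verts = T.edges.biUnion id ∧
  ∃ (m : ℕ) (e : Fin m → Finset ℕ),
    Function.Injective e ∧
    T.edges = Finset.image e Finset.univ ∧
    ∀ j : Fin m, 0 < (j : ℕ) →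
      (e j ∩ (Finset.univ.filter fun i => i < j).biUnion e).card ≤ ℓ ∧
      ∃ i : Fin m, i < j ∧ e j ∩ (Finset.univ.filter fun i => i < j).biUnion e ⊆ e i

open Finset

theorem exists_extend_injOn_image_eq {α β : Type*} [DecidableEq α] [DecidableEq β]
    [Nonempty β] {f : α → β} {V e : Finset α} {E : Finset β} (hf : Set.InjOn f V)
    (hcard : e.card = E.card) (hSE : (e ∩ V).image f ⊆ E)
    (hEV : E ∩ V.image f ⊆ (e ∩ V).image f) :
    ∃ g : α → β, Set.EqOn g f V ∧ Set.InjOn g ↑(V ∪ e) ∧ e.image g = E := by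
  have hfS : Set.InjOn f ↑(e ∩ V) := hf.mono (by simp)
  -- The new vertices `e \ V` are sent bijectively onto the new vertices `E \ f (e ∩ V)`.
  have hnew : ((e \ V : Finset α) : Set α).encard =
      ((E \ (e ∩ V).image f : Finset β) : Set β).encard := by
    rw [Set.encard_coe_eq_coe_finsetCard, Set.encard_coe_eq_coe_finsetCard,
      card_sdiff_of_subset hSE, card_image_of_injOn hfS, ← hcard, card_sdiff, inter_comm]
  obtain ⟨h, hh⟩ := (e \ V).finite_toSet.exists_bijOn_of_encard_eq hnew
  set g := (e \ V).piecewise h f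
  have hgV : Set.EqOn g f V := fun x hx =>
    piecewise_eq_of_notMem _ _ _ fun hx' => (mem_sdiff.mp hx').2 hx
  have hgN : Set.EqOn g h ↑(e \ V) := fun x hx => piecewise_eq_of_mem _ _ _ hx
  refine ⟨g, hgV, ?_, ?_⟩
  · rw [← union_sdiff_self_eq_union, coe_union, Set.injOn_union (disjoint_coe.mpr disjoint_sdiff)]
    refine ⟨hf.congr hgV.symm, hh.injOn.congr hgN.symm, fun x hx y hy hxy => ?_⟩
    rw [hgV hx, hgN hy] at hxy
    have hyE := mem_sdiff.mp (hh.mapsTo hy)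
    exact hyE.2 (hEV (mem_inter.mpr ⟨hyE.1, hxy ▸ mem_image_of_mem f hx⟩))
  · have hold : (e ∩ V).image g = (e ∩ V).image f := image_congr (hgV.mono (by simp))
    have hnew' : (e \ V).image g = E \ (e ∩ V).image f := by
      rw [image_congr hgN, ← coe_inj, coe_image, hh.image_eq]
    have he : e ∩ V ∪ e \ V = e := sup_inf_sdiff e V
    rw [← he, image_union, hold, hnew', union_sdiff_of_subset hSE]

section PrefixUnion

variable {m : ℕ} (e : Fin m → Finset ℕ)

def prefixUnion (j : ℕ) : Finset ℕ :=
  (univ.filter fun i : Fin m => (i : ℕ) < j).biUnion e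

theorem filter_lt_biUnion_eq_prefixUnion (j : Fin m) :
    (univ.filter fun i => i < j).biUnion e = prefixUnion e j := by
  simp only [prefixUnion, Fin.lt_def]

@[simp]
theorem prefixUnion_zero : prefixUnion e 0 = ∅ := by
  simp [prefixUnion]

theorem prefixUnion_succ (j : Fin m) : prefixUnion e ((j : ℕ) + 1) = prefixUnion e j ∪ e j := by
  ext v
  simp only [prefixUnion, mem_biUnion, mem_filter, mem_univ, true_and, mem_union,
    Nat.lt_succ_iff_lt_or_eq, or_and_right, exists_or, Fin.val_inj, exists_eq_left]

theorem prefixUnion_self : prefixUnion e m = univ.biUnion e := by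
  simp [prefixUnion]

theorem subset_prefixUnion {i : Fin m} {j : ℕ} (hij : (i : ℕ) < j) : e i ⊆ prefixUnion e j :=
  subset_biUnion_of_mem e (mem_filter.mpr ⟨mem_univ i, hij⟩)

end PrefixUnion

namespace KHypergraph

variable {k ℓ n : ℕ} {F : KHypergraph k}

theorem exists_edge_inter_subset_of_card_eq
    (hlin : ∀ S : Finset ℕ, S.card = ℓ + 1 → (F.edges.filter fun e => S ⊆ e).card ≤ 1)
    (hdeg : ∀ S : Finset ℕ, S.card = ℓ → (∃ e ∈ F.edges, S ⊆ e) →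
      n ≤ (F.edges.filter fun e => S ⊆ e).card)
    {A E₀ W : Finset ℕ} (hE₀ : E₀ ∈ F.edges) (hAE₀ : A ⊆ E₀) (hA : A.card = ℓ)
    (hW : (W \ A).card < n) :
    ∃ E ∈ F.edges, A ⊆ E ∧ E ∩ W ⊆ A := by
  by_contra! hbad
  have hwit : ∀ E ∈ F.edges.filter fun e => A ⊆ e, ∃ w ∈ W \ A, w ∈ E := by
    intro E hE
    rw [mem_filter] at hE
    obtain ⟨w, hw, hwA⟩ := not_subset.mp (hbad E hE.1 hE.2)
    exact ⟨w, mem_sdiff.mpr ⟨(mem_inter.mp hw).2, hwA⟩, (mem_inter.mp hw).1⟩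
  choose! w hwW hwE using hwit
  -- Pigeonhole: two edges through `A` share an extra vertex, against linearity.
  obtain ⟨E, hE, E', hE', hne, hEE'⟩ := exists_ne_map_eq_of_card_lt_of_maps_to
    (hW.trans_le (hdeg A hA ⟨E₀, hE₀, hAE₀⟩)) hwW
  have hins : (insert (w E) A).card = ℓ + 1 := by
    rw [card_insert_of_notMem (mem_sdiff.mp (hwW E hE)).2, hA]
  refine hne (card_le_one.mp (hlin _ hins) E ?_ E' ?_) <;> rw [mem_filter] at hE hE' ⊢
  · exact ⟨hE.1, insert_subset (hwE E (mem_filter.mpr hE)) hE.2⟩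
  · exact ⟨hE'.1, insert_subset (hEE' ▸ hwE E' (mem_filter.mpr hE')) hE'.2⟩

theorem exists_edge_inter_subset (hℓk : ℓ < k)
    (hlin : ∀ S : Finset ℕ, S.card = ℓ + 1 → (F.edges.filter fun e => S ⊆ e).card ≤ 1)
    (hdeg : ∀ S : Finset ℕ, S.card = ℓ → (∃ e ∈ F.edges, S ⊆ e) →
      n ≤ (F.edges.filter fun e => S ⊆ e).card)
    {A E₀ W : Finset ℕ} (hE₀ : E₀ ∈ F.edges) (hAE₀ : A ⊆ E₀) (hA : A.card ≤ ℓ)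
    (hW : (W \ A).card < n) :
    ∃ E ∈ F.edges, A ⊆ E ∧ E ∩ W ⊆ A := by
  induction hd : ℓ - A.card generalizing A E₀ with
  | zero => exact exists_edge_inter_subset_of_card_eq hlin hdeg hE₀ hAE₀ (by omega) hW
  | succ d ih =>
    -- Complete `A` inside `E₀` to an `ℓ`-set, take an edge `E₁` through it avoiding `W`
    -- elsewhere, and add to `A` a vertex of `E₁` outside that `ℓ`-set.
    obtain ⟨A₁, hAA₁, hA₁E₀, hA₁⟩ := exists_subsuperset_card_eq hAE₀ hA
      ((F.card_eq E₀ hE₀).symm ▸ hℓk.le)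
    obtain ⟨E₁, hE₁, hA₁E₁, hE₁W⟩ := exists_edge_inter_subset_of_card_eq hlin hdeg hE₀ hA₁E₀ hA₁
      ((card_le_card (sdiff_subset_sdiff le_rfl hAA₁)).trans_lt hW)
    obtain ⟨x, hxE₁, hxA₁⟩ := exists_mem_notMem_of_card_lt_card
      (hA₁.trans_lt ((F.card_eq E₁ hE₁).symm ▸ hℓk))
    have hxW : x ∉ W := fun hxW => hxA₁ (hE₁W (mem_inter.mpr ⟨hxE₁, hxW⟩))
    have hxA : x ∉ A := fun hxA => hxA₁ (hAA₁ hxA)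
    obtain ⟨E, hE, hxAE, hEW⟩ := ih hE₁ (insert_subset hxE₁ (hAA₁.trans hA₁E₁))
      (by rw [card_insert_of_notMem hxA]; omega)
      ((card_le_card (sdiff_subset_sdiff le_rfl (subset_insert x A))).trans_lt hW)
      (by rw [card_insert_of_notMem hxA]; omega)
    refine ⟨E, hE, (subset_insert x A).trans hxAE, fun y hy => ?_⟩
    have hyx : y ≠ x := fun h => hxW (h ▸ (mem_inter.mp hy).2)
    exact (mem_insert.mp (hEW hy)).resolve_left hyx

theorem exists_extend_embedding_prefixUnion (hℓk : ℓ < k)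
    (hlin : ∀ S : Finset ℕ, S.card = ℓ + 1 → (F.edges.filter fun e => S ⊆ e).card ≤ 1)
    (hdeg : ∀ S : Finset ℕ, S.card = ℓ → (∃ e ∈ F.edges, S ⊆ e) →
      n ≤ (F.edges.filter fun e => S ⊆ e).card)
    {m : ℕ} (e : Fin m → Finset ℕ) (hcard : ∀ i, (e i).card = k)
    (hn : (univ.biUnion e).card ≤ n) (J : Fin m) {f : ℕ → ℕ} {E₀ : Finset ℕ}
    (hf : Set.InjOn f ↑(prefixUnion e J)) (hS : (e J ∩ prefixUnion e J).card ≤ ℓ)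
    (hE₀ : E₀ ∈ F.edges) (hSE₀ : (e J ∩ prefixUnion e J).image f ⊆ E₀) :
    ∃ g : ℕ → ℕ, Set.EqOn g f ↑(prefixUnion e J) ∧
      Set.InjOn g ↑(prefixUnion e ((J : ℕ) + 1)) ∧ (e J).image g ∈ F.edges := by
  set P := prefixUnion e J
  have hW : ((P.image f) \ (e J ∩ P).image f).card < n := by
    have hPJ : P ∪ e J ⊆ univ.biUnion e :=
      union_subset (biUnion_subset_biUnion_of_subset_left _ (subset_univ _))
        (subset_biUnion_of_mem e (mem_univ J))
    have := card_sdiff_add_card P (e J)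
    have := card_le_card hPJ
    have := hcard J
    rw [← image_sdiff_of_injOn hf inter_subset_right, sdiff_inter_self_right]
    exact card_image_le.trans_lt (by omega)
  obtain ⟨E, hE, hSE, hEW⟩ := exists_edge_inter_subset hℓk hlin hdeg hE₀ hSE₀
    (card_image_le.trans hS) hW
  obtain ⟨g, hgf, hg, hgE⟩ := exists_extend_injOn_image_eq hf
    (by rw [hcard, F.card_eq E hE]) hSE (fun y hy => hEW (by simpa [inter_comm] using hy))
  exact ⟨g, hgf, by rwa [prefixUnion_succ e J], hgE ▸ hE⟩

theorem exists_embedding_of_tree_order (hℓk : ℓ < k) (hne : F.edges.Nonempty)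
    (hlin : ∀ S : Finset ℕ, S.card = ℓ + 1 → (F.edges.filter fun e => S ⊆ e).card ≤ 1)
    (hdeg : ∀ S : Finset ℕ, S.card = ℓ → (∃ e ∈ F.edges, S ⊆ e) →
      n ≤ (F.edges.filter fun e => S ⊆ e).card)
    {m : ℕ} (e : Fin m → Finset ℕ) (hcard : ∀ i, (e i).card = k)
    (hn : (univ.biUnion e).card ≤ n)
    (htree : ∀ j : Fin m, 0 < (j : ℕ) → (e j ∩ prefixUnion e j).card ≤ ℓ ∧
      ∃ i < j, e j ∩ prefixUnion e j ⊆ e i) :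
    ∃ f : ℕ → ℕ, Set.InjOn f ↑(univ.biUnion e) ∧ ∀ i, (e i).image f ∈ F.edges := by
  suffices h : ∀ j ≤ m, ∃ f : ℕ → ℕ,
      Set.InjOn f ↑(prefixUnion e j) ∧ ∀ i : Fin m, (i : ℕ) < j → (e i).image f ∈ F.edges by
    obtain ⟨f, hf, hfe⟩ := h m le_rfl
    exact ⟨f, prefixUnion_self e ▸ hf, fun i => hfe i i.isLt⟩
  intro j
  induction j with
  | zero => exact fun _ => ⟨id, by simp, by simp⟩
  | succ j ih =>
    intro hj
    obtain ⟨f, hf, hfe⟩ := ih (by omega)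
    set J : Fin m := ⟨j, hj⟩
    obtain ⟨hS, E₀, hE₀, hSE₀⟩ : (e J ∩ prefixUnion e j).card ≤ ℓ ∧
        ∃ E₀ ∈ F.edges, (e J ∩ prefixUnion e j).image f ⊆ E₀ := by
      rcases Nat.eq_zero_or_pos j with rfl | hpos
      · obtain ⟨E₀, hE₀⟩ := hne
        exact ⟨by simp, E₀, hE₀, by simp⟩
      · obtain ⟨hS, i, hij, hSi⟩ := htree J hpos
        exact ⟨hS, _, hfe i hij, image_subset_image hSi⟩
    obtain ⟨g, hgf, hg, hgE⟩ :=
      exists_extend_embedding_prefixUnion hℓk hlin hdeg e hcard hn J hf hS hE₀ hSE₀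
    refine ⟨g, hg, fun i hi => ?_⟩
    rcases Nat.lt_succ_iff_lt_or_eq.mp hi with hi | hi
    · rw [image_congr (hgf.mono (subset_prefixUnion e hi))]
      exact hfe i hi
    · obtain rfl : i = J := Fin.ext hi
      exact hgE

end KHypergraph

theorem stmt9_general (k ℓ n : ℕ) (h2 : ℓ < k)
    (F : KHypergraph k) (hne : F.edges.Nonempty)
    (hlin : ∀ S : Finset ℕ, S.card = ℓ + 1 → (F.edges.filter fun e => S ⊆ e).card ≤ 1)
    (hdeg : ∀ S : Finset ℕ, S.card = ℓ → (∃ e ∈ F.edges, S ⊆ e) →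
      n ≤ (F.edges.filter fun e => S ⊆ e).card) :
    ∀ T : KHypergraph k, IsLTree k ℓ T → T.verts.card ≤ n →
      ∃ f : ℕ → ℕ, F.IsCopy T f := by
  rintro T ⟨hTv, m, e, -, hTe, htree⟩ hTn
  have hverts : T.verts = univ.biUnion e := by rw [hTv, hTe, image_biUnion]; rfl
  have hedge : ∀ i, e i ∈ T.edges := fun i => hTe ▸ mem_image_of_mem e (mem_univ i)
  obtain ⟨f, hf, hfe⟩ := KHypergraph.exists_embedding_of_tree_order h2 hne hlin hdeg e
    (fun i => T.card_eq _ (hedge i)) (hverts ▸ hTn)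
    (fun j hj => by simpa only [filter_lt_biUnion_eq_prefixUnion] using htree j hj)
  refine ⟨f, hverts ▸ hf, fun v hv => ?_, fun E hE => ?_⟩
  · obtain ⟨i, -, hvi⟩ := mem_biUnion.mp (hverts ▸ hv)
    exact F.subset_verts _ (hfe i) (mem_image_of_mem f hvi)
  · obtain ⟨i, -, rfl⟩ := mem_image.mp (hTe ▸ hE)
    exact hfe i

/-- Let `1 ≤ ℓ < k` and `n ≥ k`. Let `F` be a `k`-graph with at least
one edge in which every `(ℓ+1)`-set lies in at most one edge, and every `ℓ`-set lying
in some edge lies in at least `n` edges. Then `F` contains a copy of every `k`-uniform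
`ℓ`-tree on at most `n` vertices. -/
theorem stmt9 (k ℓ n : ℕ) (h1 : 1 ≤ ℓ) (h2 : ℓ < k) (hn : k ≤ n)
    (F : KHypergraph k) (hne : F.edges.Nonempty)
    (hlin : ∀ S : Finset ℕ, S.card = ℓ + 1 → (F.edges.filter fun e => S ⊆ e).card ≤ 1)
    (hdeg : ∀ S : Finset ℕ, S.card = ℓ → (∃ e ∈ F.edges, S ⊆ e) →
      n ≤ (F.edges.filter fun e => S ⊆ e).card) :
    ∀ T : KHypergraph k, IsLTree k ℓ T → T.verts.card ≤ n →
      ∃ f : ℕ → ℕ, F.IsCopy T f :=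
  stmt9_general k ℓ n h2 F hne hlin hdeg
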